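/- If G is connected, then for all vertices i, j the accumulated flow h t i j converges to a finite limit h∞ i j as t → ∞. -/

import Mathlib

/-!
The Metropolis matrix `W` is row stochastic, with positive diagonal and positive entries on the
edges of `G`; on a connected graph with `n` vertices every entry of `W ^ n` is therefore at least
some `δ > 0`. By Doeblin's argument each multiplication by `W ^ n` shrinks the spread
`max v - min v` of a vector by the factor `1 - δ`, while multiplication by `W` never increases it.
Hence the increments `a i j * ((W ^ t g0) j - (W ^ t g0) i)` of the flow are bounded by
`C (1 - δ) ^ (t / n)`, so they are summable and the flow converges.
-/

open Finset Filter Topology Matrix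

theorem summable_pow_div {r : ℝ} (hr₀ : 0 ≤ r) (hr₁ : r < 1) (N : ℕ) [NeZero N] :
    Summable fun t : ℕ => r ^ (t / N) := by
  have hg : Summable fun _ : Fin N => (1 : ℝ) := .of_finite
  have h : Summable fun p : ℕ × Fin N => r ^ p.1 * 1 :=
    (summable_geometric_of_lt_one hr₀ hr₁).mul_of_nonneg hg
      (fun _ => pow_nonneg hr₀ _) (fun _ => zero_le_one)
  simp only [mul_one] at h
  exact (Nat.divModEquiv N).summable_iff.mpr h

section Spread

variable {ι : Type*} [Fintype ι] [Nonempty ι]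

noncomputable def spread (v : ι → ℝ) : ℝ :=
  univ.sup' univ_nonempty v - univ.inf' univ_nonempty v

theorem abs_sub_le_spread (v : ι → ℝ) (i j : ι) : |v i - v j| ≤ spread v := by
  have := le_sup' v (mem_univ i)
  have := le_sup' v (mem_univ j)
  have := inf'_le v (mem_univ i)
  have := inf'_le v (mem_univ j)
  rw [spread, abs_sub_le_iff]
  constructor <;> linarith

end Spread

namespace Matrix

section Stochastic

variable {ι : Type*} [Fintype ι] [Nonempty ι] [DecidableEq ι] {P : Matrix ι ι ℝ}

/-- Doeblin's bound: `max v - (P *ᵥ v) i = ∑ j, P i j * (max v - v j)` contains the term at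
the minimiser of `v`, whose weight is at least `δ`. -/
theorem mulVec_apply_le_sup'_sub (hP : P ∈ rowStochastic ℝ ι) {δ : ℝ}
    (hδ : ∀ i j, δ ≤ P i j) (v : ι → ℝ) (i : ι) :
    (P *ᵥ v) i ≤ univ.sup' univ_nonempty v - δ * spread v := by
  set M := univ.sup' univ_nonempty v
  obtain ⟨j₀, -, hj₀⟩ := exists_mem_eq_inf' univ_nonempty v
  have hsum : M - (P *ᵥ v) i = ∑ j, P i j * (M - v j) := by
    simp only [mulVec, dotProduct, mul_sub, sum_sub_distrib, ← sum_mul,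
      sum_row_of_mem_rowStochastic hP, one_mul]
  have hle : P i j₀ * (M - v j₀) ≤ ∑ j, P i j * (M - v j) :=
    single_le_sum (fun j _ => mul_nonneg (nonneg_of_mem_rowStochastic hP (i := i) (j := j))
      (sub_nonneg.2 (le_sup' v (mem_univ j)))) (mem_univ j₀)
  have hδle : δ * spread v ≤ P i j₀ * (M - v j₀) := by
    rw [spread, hj₀]
    exact mul_le_mul_of_nonneg_right (hδ i j₀) (sub_nonneg.2 (le_sup' v (mem_univ j₀)))
  linarith

theorem inf'_le_mulVec_apply (hP : P ∈ rowStochastic ℝ ι) (v : ι → ℝ) (i : ι) :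
    univ.inf' univ_nonempty v ≤ (P *ᵥ v) i := by
  set m := univ.inf' univ_nonempty v
  have hsum : (P *ᵥ v) i - m = ∑ j, P i j * (v j - m) := by
    simp only [mulVec, dotProduct, mul_sub, sum_sub_distrib, ← sum_mul,
      sum_row_of_mem_rowStochastic hP, one_mul]
  have : 0 ≤ ∑ j, P i j * (v j - m) :=
    sum_nonneg fun j _ => mul_nonneg (nonneg_of_mem_rowStochastic hP (i := i) (j := j))
      (sub_nonneg.2 (inf'_le v (mem_univ j)))
  linarith

theorem spread_mulVec_le (hP : P ∈ rowStochastic ℝ ι) {δ : ℝ} (hδ : ∀ i j, δ ≤ P i j)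
    (v : ι → ℝ) : spread (P *ᵥ v) ≤ (1 - δ) * spread v := by
  have hsup := sup'_le univ_nonempty _ fun i _ => mulVec_apply_le_sup'_sub hP hδ v i
  have hinf := le_inf' univ_nonempty _ fun i _ => inf'_le_mulVec_apply hP v i
  unfold spread at hsup ⊢
  linarith

theorem spread_mulVec_le_spread (hP : P ∈ rowStochastic ℝ ι) (v : ι → ℝ) :
    spread (P *ᵥ v) ≤ spread v := by
  simpa using spread_mulVec_le hP (fun _ _ => nonneg_of_mem_rowStochastic hP) v

theorem spread_pow_mulVec_le (hP : P ∈ rowStochastic ℝ ι) {δ : ℝ}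
    (hδ : ∀ i j, δ ≤ P i j) (q : ℕ) (v : ι → ℝ) : spread ((P ^ q) *ᵥ v) ≤ (1 - δ) ^ q * spread v := by
  obtain ⟨i⟩ := ‹Nonempty ι›
  have hδ₁ : 0 ≤ 1 - δ := sub_nonneg.2 ((hδ i i).trans (le_one_of_mem_rowStochastic hP))
  induction q with
  | zero => simp
  | succ q ih =>
    calc spread ((P ^ (q + 1)) *ᵥ v) = spread (P *ᵥ ((P ^ q) *ᵥ v)) := by
          rw [mulVec_mulVec, pow_succ']
      _ ≤ (1 - δ) * ((1 - δ) ^ q * spread v) :=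
          (spread_mulVec_le hP hδ _).trans (mul_le_mul_of_nonneg_left ih hδ₁)
      _ = (1 - δ) ^ (q + 1) * spread v := by ring

theorem spread_pow_mulVec_le_of_le_pow_entries (hP : P ∈ rowStochastic ℝ ι) {N : ℕ}
    {δ : ℝ} (hδ : ∀ i j, δ ≤ (P ^ N) i j) (t : ℕ) (v : ι → ℝ) :
    spread ((P ^ t) *ᵥ v) ≤ (1 - δ) ^ (t / N) * spread v := by
  calc spread ((P ^ t) *ᵥ v) = spread ((P ^ (t % N)) *ᵥ (((P ^ N) ^ (t / N)) *ᵥ v)) := by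
        rw [mulVec_mulVec, ← pow_mul, ← pow_add, Nat.mod_add_div]
    _ ≤ spread (((P ^ N) ^ (t / N)) *ᵥ v) := spread_mulVec_le_spread (pow_mem hP _) _
    _ ≤ (1 - δ) ^ (t / N) * spread v := spread_pow_mulVec_le (pow_mem hP _) hδ _ _

end Stochastic

section Positivity

variable {l m o : Type*} [Fintype m]

theorem mul_apply_pos_of_pos {A : Matrix l m ℝ} {B : Matrix m o ℝ}
    (hA : ∀ i j, 0 ≤ A i j) (hB : ∀ i j, 0 ≤ B i j) {i : l} {k : m} {j : o}
    (hik : 0 < A i k) (hkj : 0 < B k j) : 0 < (A * B) i j :=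
  sum_pos' (fun k _ => mul_nonneg (hA i k) (hB k j)) ⟨k, mem_univ k, mul_pos hik hkj⟩

variable {V : Type*} [Fintype V] [DecidableEq V] {G : SimpleGraph V} {A : Matrix V V ℝ}

theorem pow_apply_pos_of_walk (hA : ∀ i j, 0 ≤ A i j)
    (hadj : ∀ i j, G.Adj i j → 0 < A i j) {i j : V} (p : G.Walk i j) :
    0 < (A ^ p.length) i j := by
  induction p with
  | nil => simp
  | cons h _ ih =>
    rw [SimpleGraph.Walk.length_cons, pow_succ']
    exact mul_apply_pos_of_pos hA (pow_apply_nonneg hA _) (hadj _ _ h) ih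

theorem pow_apply_pos_of_le (hA : ∀ i j, 0 ≤ A i j) (hdiag : ∀ i, 0 < A i i)
    {m k : ℕ} (hmk : m ≤ k) {i j : V} (h : 0 < (A ^ m) i j) : 0 < (A ^ k) i j := by
  induction k, hmk using Nat.le_induction with
  | base => exact h
  | succ k _ ih =>
    rw [pow_succ]
    exact mul_apply_pos_of_pos (pow_apply_nonneg hA _) hA ih (hdiag j)

theorem pow_card_apply_pos (hG : G.Connected) (hA : ∀ i j, 0 ≤ A i j)
    (hdiag : ∀ i, 0 < A i i) (hadj : ∀ i j, G.Adj i j → 0 < A i j) (i j : V) :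
    0 < (A ^ Fintype.card V) i j := by
  obtain ⟨p⟩ := hG.preconnected i j
  exact pow_apply_pos_of_le hA hdiag p.toPath.2.length_lt.le
    (pow_apply_pos_of_walk hA hadj p.toPath.1)

end Positivity

theorem summable_pow_mulVec_sub {ι : Type*} [Fintype ι] [DecidableEq ι]
    {P : Matrix ι ι ℝ} (hP : P ∈ rowStochastic ℝ ι) {N : ℕ} [NeZero N]
    (hpos : ∀ i j, 0 < (P ^ N) i j) (v : ι → ℝ) (i j : ι) :
    Summable fun t => (P ^ t *ᵥ v) i - (P ^ t *ᵥ v) j := by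
  have : Nonempty ι := ⟨i⟩
  obtain ⟨⟨k₀, l₀⟩, hmin⟩ := Finite.exists_min fun p : ι × ι => (P ^ N) p.1 p.2
  set δ := (P ^ N) k₀ l₀
  have hδ₁ : 0 ≤ 1 - δ := sub_nonneg.2 (le_one_of_mem_rowStochastic (pow_mem hP N))
  have hδ₀ : 1 - δ < 1 := sub_lt_self 1 (hpos k₀ l₀)
  refine .of_norm_bounded ((summable_pow_div hδ₁ hδ₀ N).mul_right (spread v)) fun t => ?_
  exact (abs_sub_le_spread _ i j).trans
    (spread_pow_mulVec_le_of_le_pow_entries hP (fun k l => hmin (k, l)) t v)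

end Matrix

section Metropolis

variable {V : Type*} [Fintype V] (G : SimpleGraph V) [DecidableRel G.Adj]

noncomputable def metropolisWeight (i j : V) : ℝ :=
  1 / (1 + (max (G.degree i) (G.degree j) : ℝ))

theorem metropolisWeight_pos (i j : V) : 0 < metropolisWeight G i j := by
  unfold metropolisWeight
  positivity

theorem sum_metropolisWeight_lt_one (i : V) :
    ∑ k ∈ G.neighborFinset i, metropolisWeight G i k < 1 := by
  have hd : (0 : ℝ) < 1 + G.degree i := by positivity
  calc ∑ k ∈ G.neighborFinset i, metropolisWeight G i k
      ≤ ∑ _k ∈ G.neighborFinset i, 1 / (1 + (G.degree i : ℝ)) :=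
        sum_le_sum fun k _ => one_div_le_one_div_of_le hd (by simp)
    _ = G.degree i / (1 + G.degree i) := by
        rw [sum_const, SimpleGraph.card_neighborFinset_eq_degree, nsmul_eq_mul, mul_one_div]
    _ < 1 := (div_lt_one hd).2 (lt_one_add _)

variable [DecidableEq V]

noncomputable def metropolisMatrix : Matrix V V ℝ :=
  Matrix.of fun i j =>
    if G.Adj i j then metropolisWeight G i j
    else if i = j then 1 - ∑ k ∈ G.neighborFinset i, metropolisWeight G i k
    else 0

theorem metropolisMatrix_apply_pos_of_adj {i j : V} (h : G.Adj i j) :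
    0 < metropolisMatrix G i j := by
  simpa [metropolisMatrix, h] using metropolisWeight_pos G i j

theorem metropolisMatrix_apply_self_pos (i : V) : 0 < metropolisMatrix G i i := by
  simpa [metropolisMatrix] using sum_metropolisWeight_lt_one G i

theorem metropolisMatrix_mem_rowStochastic : metropolisMatrix G ∈ rowStochastic ℝ V := by
  refine mem_rowStochastic_iff_sum.2 ⟨fun i j => ?_, fun i => ?_⟩
  · by_cases h : G.Adj i j
    · exact (metropolisMatrix_apply_pos_of_adj G h).le
    by_cases hij : i = j
    · exact hij ▸ (metropolisMatrix_apply_self_pos G i).le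
    simp [metropolisMatrix, h, hij]
  · have hsplit : ∀ j, metropolisMatrix G i j = (if G.Adj i j then metropolisWeight G i j else 0)
        + if i = j then 1 - ∑ k ∈ G.neighborFinset i, metropolisWeight G i k else 0 := by
      intro j
      by_cases h : G.Adj i j
      · simp [metropolisMatrix, h, G.ne_of_adj h]
      · simp [metropolisMatrix, h]
    simp only [hsplit, sum_add_distrib, sum_ite_eq, mem_univ, if_true, ← sum_filter,
      ← SimpleGraph.neighborFinset_eq_filter]
    ring

end Metropolis

theorem stmt14_general (n : ℕ) (G : SimpleGraph (Fin n)) [DecidableRel G.Adj]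
    (W : Matrix (Fin n) (Fin n) ℝ)
    (hW : ∀ i j, W i j =
      if G.Adj i j then 1 / (1 + (max (G.degree i) (G.degree j) : ℝ))
      else if i = j then
        1 - ∑ k ∈ G.neighborFinset i, 1 / (1 + (max (G.degree i) (G.degree k) : ℝ))
      else 0)
    (a : Fin n → Fin n → ℝ)
    (hG : G.Connected)
    (g0 : Fin n → ℝ)
    (h : ℕ → Fin n → Fin n → ℝ)
    (hzero : ∀ i j, h 0 i j = 0)
    (hrec : ∀ t i j, h (t + 1) i j =
      h t i j + a i j * (((W ^ t).mulVec g0) j - ((W ^ t).mulVec g0) i)) :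
    ∀ i j, ∃ L : ℝ, Tendsto (fun t => h t i j) atTop (𝓝 L) := by
  intro i j
  have : NeZero n := NeZero.of_pos i.pos
  obtain rfl : W = metropolisMatrix G := Matrix.ext hW
  have hstoch := metropolisMatrix_mem_rowStochastic G
  have hpos : ∀ k l, 0 < (metropolisMatrix G ^ n) k l := by
    simpa using pow_card_apply_pos (A := metropolisMatrix G) hG
      (fun _ _ => nonneg_of_mem_rowStochastic hstoch) (metropolisMatrix_apply_self_pos G) (fun _ _ => metropolisMatrix_apply_pos_of_adj G)
  have hsum := (summable_pow_mulVec_sub hstoch hpos g0 j i).mul_left (a i j)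
  have hpartial : ∀ t, h t i j = ∑ s ∈ range t,
      a i j * ((metropolisMatrix G ^ s *ᵥ g0) j - (metropolisMatrix G ^ s *ᵥ g0) i) := by
    intro t
    induction t with
    | zero => simp [hzero]
    | succ t ih => rw [hrec, sum_range_succ, ih]
  exact ⟨_, hsum.hasSum.tendsto_sum_nat.congr fun t => (hpartial t).symm⟩

theorem stmt14 (n : ℕ) (hn : 1 ≤ n) (G : SimpleGraph (Fin n)) [DecidableRel G.Adj]
    (W : Matrix (Fin n) (Fin n) ℝ)
    (hW : ∀ i j, W i j =
      if G.Adj i j then 1 / (1 + (max (G.degree i) (G.degree j) : ℝ))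
      else if i = j then
        1 - ∑ k ∈ G.neighborFinset i, 1 / (1 + (max (G.degree i) (G.degree k) : ℝ))
      else 0)
    (a : Fin n → Fin n → ℝ)
    (ha : ∀ i j, a i j =
      if G.Adj i j then 1 / (1 + (max (G.degree i) (G.degree j) : ℝ)) else 0)
    (hG : G.Connected)
    (g0 : Fin n → ℝ)
    (h : ℕ → Fin n → Fin n → ℝ)
    (hzero : ∀ i j, h 0 i j = 0)
    (hrec : ∀ t i j, h (t + 1) i j =
      h t i j + a i j * (((W ^ t).mulVec g0) j - ((W ^ t).mulVec g0) i)) :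
    ∀ i j, ∃ L : ℝ, Tendsto (fun t => h t i j) atTop (𝓝 L) :=
  stmt14_general n G W hW a hG g0 h hzero hrec
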